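/- Let F be a finite field, H ≤ F^× a multiplicative subgroup, and ψ a nontrivial additive character of F. Then |Σ_{x∈H} ψ(x)| ≤ √|F|. Consequently if |H| ≥ |F|^{1/2+α} for some α ∈ (0,1/2), then |(1/|H|) Σ_{x∈H} ψ(x)| ≤ |F|^{-α}. -/

import Mathlib

/-
Put `f c = ∑_{x ∈ H} ψ (c x)`. Orthogonality of the characters `x ↦ ψ (c x)` gives the Parseval
identity `∑_{c ∈ F} |f c|² = |F| |H|`, while `f` is constant, equal to the sum `S` in question, on
`H` itself. Keeping only the terms `c ∈ H` yields `|H| |S|² ≤ |F| |H|`, i.e. `|S| ≤ √|F|`.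
-/

open Finset

namespace AddChar

variable {R : Type*} [CommRing R] [Fintype R] {ψ : AddChar R ℂ}

theorem sum_norm_sq_sum_apply_mul_of_injective {ι : Type*} [Fintype ι] (hψ : ψ.IsPrimitive) {g : ι → R}
    (hg : Function.Injective g) :
    ∑ c : R, ‖∑ i, ψ (c * g i)‖ ^ 2 = Fintype.card R * Fintype.card ι := by
  classical
  have hC : ∑ c : R, ((‖∑ i, ψ (c * g i)‖ ^ 2 : ℝ) : ℂ) = Fintype.card R * Fintype.card ι := by
    calc ∑ c : R, ((‖∑ i, ψ (c * g i)‖ ^ 2 : ℝ) : ℂ)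
        = ∑ i, ∑ j, ∑ c : R, ψ (c * (g j - g i)) := by
          simp only [Complex.ofReal_pow, ← Complex.mul_conj', map_sum, sum_mul, mul_sum,
            ← map_neg_eq_conj, ← map_add_eq_mul, mul_sub, ← sub_eq_add_neg]
          rw [sum_comm]
          exact sum_congr rfl fun _ _ => sum_comm
      _ = ∑ i : ι, (Fintype.card R : ℂ) := by
          refine sum_congr rfl fun i _ => ?_
          simp_rw [sum_mulShift _ hψ, sub_eq_zero, hg.eq_iff]
          simp
      _ = Fintype.card R * Fintype.card ι := by simp [mul_comm]
  exact_mod_cast hC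

end AddChar

namespace Subgroup

variable {R : Type*} [CommRing R] (H : Subgroup Rˣ) [Fintype H]

theorem sum_addChar_mul_eq (ψ : AddChar R ℂ) (u : H) :
    ∑ x : H, ψ (((u : Rˣ) : R) * ((x : Rˣ) : R)) = ∑ x : H, ψ ((x : Rˣ) : R) :=
  Fintype.sum_equiv (Equiv.mulLeft u) _ _ fun x => by simp

theorem norm_sum_addChar_le_sqrt_card [Fintype R] {ψ : AddChar R ℂ} (hψ : ψ.IsPrimitive) :
    ‖∑ x : H, ψ ((x : Rˣ) : R)‖ ≤ √(Fintype.card R) := by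
  set f : R → ℝ := fun c => ‖∑ x : H, ψ (c * ((x : Rˣ) : R))‖ ^ 2
  set g : H ↪ R := ⟨fun x => ((x : Rˣ) : R), Units.val_injective.comp Subtype.val_injective⟩
  have hH : (0 : ℝ) < Fintype.card H := by exact_mod_cast Fintype.card_pos
  have key : Fintype.card H * ‖∑ x : H, ψ ((x : Rˣ) : R)‖ ^ 2 ≤ Fintype.card R * Fintype.card H :=
    calc Fintype.card H * ‖∑ x : H, ψ ((x : Rˣ) : R)‖ ^ 2
        = ∑ u : H, f (g u) := by simp [f, g, sum_addChar_mul_eq, Finset.card_univ]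
      _ = ∑ c ∈ univ.map g, f c := (sum_map _ _ _).symm
      _ ≤ ∑ c : R, f c := sum_le_univ_sum_of_nonneg fun _ => by positivity
      _ = Fintype.card R * Fintype.card H := AddChar.sum_norm_sq_sum_apply_mul_of_injective hψ g.injective
  rw [mul_comm (Fintype.card R : ℝ)] at key
  exact Real.le_sqrt_of_sq_le (le_of_mul_le_mul_left key hH)

end Subgroup

theorem stmt2_general {F : Type*} [Field F] [Fintype F]
    (H : Subgroup Fˣ) [Fintype H] (ψ : AddChar F ℂ) (hψ : ψ ≠ 1) :
    ‖∑ x : H, ψ (((x : Fˣ) : F))‖ ≤ Real.sqrt (Fintype.card F) ∧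
      ∀ α : ℝ, α ∈ Set.Ioo (0 : ℝ) (1/2) →
        ((Fintype.card F : ℝ) ^ ((1:ℝ)/2 + α) ≤ (Fintype.card H : ℝ)) →
        ‖(1 / (Fintype.card H : ℂ)) * ∑ x : H, ψ (((x : Fˣ) : F))‖
          ≤ (Fintype.card F : ℝ) ^ (-α) := by
  have hS := H.norm_sum_addChar_le_sqrt_card (AddChar.IsPrimitive.of_ne_one hψ)
  refine ⟨hS, fun α _ hH => ?_⟩
  have hF : (0 : ℝ) < Fintype.card F := by exact_mod_cast Fintype.card_pos
  rw [norm_mul, one_div, norm_inv, Complex.norm_natCast, inv_mul_eq_div]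
  calc _ ≤ √(Fintype.card F) / (Fintype.card F : ℝ) ^ ((1 : ℝ) / 2 + α) :=
        div_le_div₀ (Real.sqrt_nonneg _) hS (by positivity) hH
    _ = (Fintype.card F : ℝ) ^ (-α) := by
        rw [Real.sqrt_eq_rpow, ← Real.rpow_sub hF]
        ring_nf

/-- For a multiplicative subgroup `H ≤ F^×` of a finite field `F` and a
nontrivial additive character `ψ`, one has `|∑_{x∈H} ψ(x)| ≤ √|F|`; consequently if
`|H| ≥ |F|^(1/2+α)` with `α ∈ (0,1/2)`, the normalized sum is at most `|F|^(-α)`. -/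
theorem stmt2 {F : Type*} [Field F] [Fintype F] [DecidableEq F]
    (H : Subgroup Fˣ) [Fintype H] (ψ : AddChar F ℂ) (hψ : ψ ≠ 1) :
    ‖∑ x : H, ψ (((x : Fˣ) : F))‖ ≤ Real.sqrt (Fintype.card F) ∧
      ∀ α : ℝ, α ∈ Set.Ioo (0 : ℝ) (1/2) →
        ((Fintype.card F : ℝ) ^ ((1:ℝ)/2 + α) ≤ (Fintype.card H : ℝ)) →
        ‖(1 / (Fintype.card H : ℂ)) * ∑ x : H, ψ (((x : Fˣ) : F))‖
          ≤ (Fintype.card F : ℝ) ^ (-α) :=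
  stmt2_general H ψ hψ
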